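/- Fix ε > 0, δ ∈ (0,1), and integers K ≥ 1, T ≥ 2, M ≥ 1, N' ≥ 1. Let g_1,...,g_K : [N'] → ℝ be functions with 1/(TKM) ≤ g_j(v) ≤ 1/M for all j ∈ [K], v ∈ [N'] (the clipped distributions p̄_{t,j}[·]). Let h be any random map from Y to [N'] (the random clipping map), let Lap_1,...,Lap_K be i.i.d. Laplace random variables with scale (2√(2K ln(1/δ)) + √(Kε))·log(KT)/ε, independent of h, and let c, c' be any real constants. Define the randomized map R : Y → ℝ^K by R(y)_j = −c·( log(g_j(h(y))) + Lap_j + log M − c' ). Then R is (ε,δ)-locally differentially private: for all y, y' ∈ Y and all measurable S ⊆ ℝ^K, Pr(R(y) ∈ S) ≤ e^ε · Pr(R(y') ∈ S) + δ. -/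

import Mathlib

/-!
Shifting a vector of i.i.d. Laplace noises of scale `b` by `s` multiplies its density by
`exp (L / b)`, where `L x = ∑ⱼ (|xⱼ + sⱼ| - |xⱼ|)` is the privacy loss. Off the event
`εb ≤ L` the two densities are within a factor `e^ε`, and when `|sⱼ| ≤ Δ` a Chernoff bound
shows that this event has probability at most `δ`: each coordinate of `L` satisfies
`E exp (θ (|t + s| - |t|)) ≤ exp (θ²s²/2 + θs²/b)`, and `θ = √(2K log(1/δ)) / (KΔ)` brings the
total exponent below `log δ`. Changing the input of the mechanism from `v'` to `v` shifts the
noisy log-likelihoods by a vector bounded coordinatewise by the sensitivity `Δ = log (KT)`, and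
averaging the resulting bound over the random clipping map gives the claim.
-/

open MeasureTheory ENNReal

/-- The Laplace distribution on `ℝ` with scale `b`, i.e. the measure with density
`x ↦ (1/(2b)) · exp(−|x|/b)` with respect to Lebesgue measure. -/
noncomputable def laplaceMeasure (b : ℝ) : Measure ℝ :=
  MeasureTheory.volume.withDensity fun x =>
    ENNReal.ofReal ((1 / (2 * b)) * Real.exp (-|x| / b))

open Set

namespace Real

theorem sinh_le_mul_cosh {y : ℝ} (hy : 0 ≤ y) : sinh y ≤ y * cosh y := by
  refine hasSum_le (fun n => ?_) (hasSum_sinh y) ((hasSum_cosh y).mul_left y)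
  rw [pow_succ', mul_div_assoc]
  gcongr
  omega

theorem cosh_add_sinh_mul_one_sub_exp_le {a b θ : ℝ} (hb : 0 < b) (ha : 0 ≤ a) (hθ : 0 ≤ θ) :
    cosh (θ * a) + sinh (θ * a) * (1 - exp (-a / b))
      ≤ exp (θ ^ 2 * a ^ 2 / 2 + θ * a ^ 2 / b) := by
  have hθa : 0 ≤ θ * a := mul_nonneg hθ ha
  have htail : 1 - exp (-a / b) ≤ a / b := by
    linarith [add_one_le_exp (-a / b), neg_div b a]
  have htail_nonneg : 0 ≤ 1 - exp (-a / b) :=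
    sub_nonneg.mpr (exp_le_one_iff.mpr (div_nonpos_of_nonpos_of_nonneg (by linarith) hb.le))
  calc cosh (θ * a) + sinh (θ * a) * (1 - exp (-a / b))
      ≤ cosh (θ * a) + θ * a * cosh (θ * a) * (a / b) := by
        gcongr _ + ?_
        exact mul_le_mul (sinh_le_mul_cosh hθa) htail htail_nonneg (by positivity)
    _ = cosh (θ * a) * (1 + θ * a ^ 2 / b) := by ring
    _ ≤ exp (θ ^ 2 * a ^ 2 / 2) * exp (θ * a ^ 2 / b) := by
        gcongr
        · calc cosh (θ * a) ≤ exp ((θ * a) ^ 2 / 2) := cosh_le_exp_half_sq _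
            _ = exp (θ ^ 2 * a ^ 2 / 2) := by ring_nf
        · linarith [add_one_le_exp (θ * a ^ 2 / b)]
    _ = _ := (exp_add _ _).symm

theorem abs_log_sub_log_le_log_div {a c x y : ℝ} (ha : 0 < a) (hx : x ∈ Icc a c)
    (hy : y ∈ Icc a c) : |log x - log y| ≤ log (c / a) := by
  have hc : 0 < c := ha.trans_le (hx.1.trans hx.2)
  rw [log_div hc.ne' ha.ne', abs_sub_le_iff]
  have hlog : ∀ z ∈ Icc a c, log a ≤ log z ∧ log z ≤ log c := fun z hz =>
    ⟨log_le_log ha hz.1, log_le_log (ha.trans_le hz.1) hz.2⟩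
  constructor <;> linarith [hlog x hx, hlog y hy]

end Real

namespace MeasureTheory

theorem lintegral_fin_nat_prod_eq_prod {n : ℕ} {E : Type*} [MeasurableSpace E]
    {μ : Fin n → Measure E} [∀ i, SigmaFinite (μ i)] {f : Fin n → E → ℝ≥0∞}
    (hf : ∀ i, Measurable (f i)) :
    ∫⁻ x, ∏ i, f i (x i) ∂Measure.pi μ = ∏ i, ∫⁻ x, f i x ∂μ i := by
  induction n with
  | zero => simp
  | succ n ih =>
    calc
      _ = ∫⁻ x : E × (Fin n → E), f 0 x.1 * ∏ i : Fin n, f i.succ (x.2 i)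
            ∂(μ 0).prod (Measure.pi fun i => μ i.succ) := by
        rw [((measurePreserving_piFinSuccAbove μ 0).symm).lintegral_map_equiv]
        simp_rw [MeasurableEquiv.piFinSuccAbove_symm_apply, Fin.insertNthEquiv,
          Fin.prod_univ_succ, Fin.insertNth_zero, Equiv.coe_fn_mk, Fin.cons_succ,
          Fin.zero_succAbove, cast_eq, Fin.cons_zero]
      _ = (∫⁻ x, f 0 x ∂μ 0) * ∏ i : Fin n, ∫⁻ x, f i.succ x ∂μ i.succ := by
        rw [← ih fun i => hf i.succ]
        exact lintegral_prod_mul (g := fun x : Fin n → E => ∏ i : Fin n, f i.succ (x i))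
          (hf 0).aemeasurable
          (Finset.measurable_prod _ fun i _ =>
            (hf i.succ).comp (measurable_pi_apply i)).aemeasurable
      _ = _ := (Fin.prod_univ_succ fun i => ∫⁻ x, f i x ∂μ i).symm

theorem lintegral_fintype_prod_eq_prod {ι : Type*} [Fintype ι] {E : Type*} [MeasurableSpace E]
    {μ : ι → Measure E} [∀ i, SigmaFinite (μ i)] {f : ι → E → ℝ≥0∞}
    (hf : ∀ i, Measurable (f i)) :
    ∫⁻ x, ∏ i, f i (x i) ∂Measure.pi μ = ∏ i, ∫⁻ x, f i x ∂μ i := by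
  let e := (Fintype.equivFin ι).symm
  rw [(measurePreserving_piCongrLeft μ e).lintegral_map_equiv]
  simp_rw [← e.prod_comp, MeasurableEquiv.coe_piCongrLeft, Equiv.piCongrLeft_apply_apply]
  exact lintegral_fin_nat_prod_eq_prod fun i => hf (e i)

theorem Measure.pi_withDensity {ι : Type*} [Fintype ι] {E : Type*} [MeasurableSpace E]
    {μ : ι → Measure E} [∀ i, SigmaFinite (μ i)] {f : ι → E → ℝ≥0∞} (hf : ∀ i, Measurable (f i))
    [∀ i, SigmaFinite ((μ i).withDensity (f i))] :
    Measure.pi (fun i => (μ i).withDensity (f i))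
      = (Measure.pi μ).withDensity fun x => ∏ i, f i (x i) := by
  refine Measure.pi_eq fun s hs => ?_
  rw [withDensity_apply _ (.univ_pi hs), ← lintegral_indicator (.univ_pi hs)]
  have hbox : (univ.pi s).indicator (fun x => ∏ i, f i (x i))
      = fun x => ∏ i, (s i).indicator (f i) (x i) := by
    ext x
    by_cases hx : x ∈ univ.pi s
    · rw [indicator_of_mem hx]
      exact Finset.prod_congr rfl fun i _ => (indicator_of_mem (hx i trivial) _).symm
    · obtain ⟨i, hi⟩ : ∃ i, x i ∉ s i := by simpa [mem_univ_pi] using hx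
      rw [indicator_of_notMem hx,
        Finset.prod_eq_zero (Finset.mem_univ i) (indicator_of_notMem hi _)]
  rw [hbox, lintegral_fintype_prod_eq_prod fun i => (hf i).indicator (hs i)]
  simp_rw [lintegral_indicator (hs _), withDensity_apply _ (hs _)]

variable {α : Type*} [MeasurableSpace α]

theorem withDensity_apply_le_mul_add {μ : Measure α} {f g : α → ℝ≥0∞} (hg : Measurable g)
    {c : ℝ≥0∞} {A F : Set α} (hA : MeasurableSet A) (hF : MeasurableSet F)
    (hfg : ∀ x ∉ F, f x ≤ c * g x) :
    μ.withDensity f A ≤ c * μ.withDensity g A + μ.withDensity f F := by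
  calc μ.withDensity f A ≤ μ.withDensity f (A \ F) + μ.withDensity f F := by
        rw [← measure_union disjoint_sdiff_left hF, sdiff_union_self]
        exact measure_mono subset_union_left
    _ ≤ c * μ.withDensity g A + μ.withDensity f F := by
        gcongr
        calc μ.withDensity f (A \ F) ≤ ∫⁻ x in A \ F, c * g x ∂μ := by
              rw [withDensity_apply _ (hA.diff hF)]
              exact setLIntegral_mono (hg.const_mul c) fun x hx => hfg x hx.2
          _ ≤ c * μ.withDensity g A := by
              rw [lintegral_const_mul c hg, withDensity_apply _ hA]
              gcongr
              exact sdiff_subset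

theorem withDensity_comp_add_right_apply_preimage {G : Type*} [MeasurableSpace G] [AddGroup G]
    [MeasurableAdd G] {μ : Measure G} [μ.IsAddRightInvariant] {f : G → ℝ≥0∞} (g : G)
    {B : Set G} (hB : MeasurableSet B) :
    μ.withDensity (fun x => f (x + g)) ((· + g) ⁻¹' B) = μ.withDensity f B := by
  rw [withDensity_apply _ (measurable_add_const g hB), withDensity_apply _ hB,
    ← lintegral_indicator (measurable_add_const g hB), ← lintegral_indicator hB,
    ← lintegral_add_right_eq_self (B.indicator f) g]
  rfl

theorem lintegral_le_mul_lintegral_add_of_forall_le {μ μ' : Measure α} [IsProbabilityMeasure μ]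
    [IsProbabilityMeasure μ'] {f : α → ℝ≥0∞} (hf : Measurable f) {c d : ℝ≥0∞}
    (hfc : ∀ v v', f v ≤ c * f v' + d) :
    ∫⁻ v, f v ∂μ ≤ c * ∫⁻ v, f v ∂μ' + d := by
  have hpoint : ∀ v, f v ≤ c * ∫⁻ v, f v ∂μ' + d := fun v =>
    calc f v = ∫⁻ _, f v ∂μ' := by simp
      _ ≤ ∫⁻ v', (c * f v' + d) ∂μ' := lintegral_mono (hfc v)
      _ = c * ∫⁻ v, f v ∂μ' + d := by
          rw [lintegral_add_right _ measurable_const, lintegral_const_mul c hf]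
          simp
  calc ∫⁻ v, f v ∂μ ≤ ∫⁻ _, (c * ∫⁻ v, f v ∂μ' + d) ∂μ := lintegral_mono hpoint
    _ = c * ∫⁻ v, f v ∂μ' + d := by simp

theorem lintegral_ofReal_exp_mul_le_of_eqOn {μ : Measure α} [IsProbabilityMeasure μ]
    {Z : α → ℝ} {a θ : ℝ} (hθ : 0 ≤ θ) {T : Set α} (hT : MeasurableSet T)
    (hZ : ∀ t, Z t ≤ a) (hZT : ∀ t ∈ T, Z t = -a) :
    ∫⁻ t, ENNReal.ofReal (Real.exp (θ * Z t)) ∂μ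
      ≤ ENNReal.ofReal (Real.exp (-(θ * a))) * μ T
        + ENNReal.ofReal (Real.exp (θ * a)) * μ Tᶜ := by
  rw [← lintegral_add_compl _ hT, ← setLIntegral_const, ← setLIntegral_const]
  refine add_le_add (setLIntegral_congr_fun hT fun t ht => ?_).le
    (setLIntegral_mono measurable_const fun t _ => ?_)
  · rw [hZT t ht, mul_neg]
  · exact ENNReal.ofReal_le_ofReal (Real.exp_le_exp.mpr (mul_le_mul_of_nonneg_left (hZ t) hθ))

theorem measure_pi_sum_ge_le_exp_mul_prod {ι : Type*} [Fintype ι] {E : Type*} [MeasurableSpace E]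
    {μ : ι → Measure E} [∀ i, SigmaFinite (μ i)] {Z : ι → E → ℝ} (hZ : ∀ i, Measurable (Z i))
    {θ : ℝ} (hθ : 0 ≤ θ) (r : ℝ) :
    Measure.pi μ {x | r ≤ ∑ i, Z i (x i)}
      ≤ ENNReal.ofReal (Real.exp (-(θ * r)))
        * ∏ i, ∫⁻ t, ENNReal.ofReal (Real.exp (θ * Z i t)) ∂μ i := by
  have hmeas : ∀ i, Measurable fun t => ENNReal.ofReal (Real.exp (θ * Z i t)) := fun i => by
    fun_prop
  rw [← lintegral_fintype_prod_eq_prod hmeas, ← lintegral_const_mul _ (by fun_prop)]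
  calc Measure.pi μ {x | r ≤ ∑ i, Z i (x i)}
      = ∫⁻ x in {x | r ≤ ∑ i, Z i (x i)}, 1 ∂Measure.pi μ := (setLIntegral_one _).symm
    _ ≤ ∫⁻ x, ENNReal.ofReal (Real.exp (-(θ * r)))
          * ∏ i, ENNReal.ofReal (Real.exp (θ * Z i (x i))) ∂Measure.pi μ := by
        refine (setLIntegral_mono (by fun_prop) fun x hx => ?_).trans
          (setLIntegral_le_lintegral _ _)
        rw [← ENNReal.ofReal_prod_of_nonneg fun i _ => (Real.exp_pos _).le, ← Real.exp_sum,
          ← ENNReal.ofReal_mul (Real.exp_pos _).le, ← Real.exp_add, ← Finset.mul_sum]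
        exact ENNReal.one_le_ofReal.mpr (Real.one_le_exp (by nlinarith [hx.out]))

end MeasureTheory

noncomputable def laplacePDF (b x : ℝ) : ℝ := 1 / (2 * b) * Real.exp (-|x| / b)

theorem laplaceMeasure_eq_withDensity (b : ℝ) :
    laplaceMeasure b = volume.withDensity fun x => ENNReal.ofReal (laplacePDF b x) := rfl

@[fun_prop]
theorem measurable_laplacePDF (b : ℝ) : Measurable (laplacePDF b) := by
  unfold laplacePDF
  fun_prop

theorem laplacePDF_neg (b x : ℝ) : laplacePDF b (-x) = laplacePDF b x := by
  simp [laplacePDF]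

theorem laplacePDF_eq_exp_mul_laplacePDF_add (b x s : ℝ) :
    laplacePDF b x = Real.exp ((|x + s| - |x|) / b) * laplacePDF b (x + s) := by
  rw [laplacePDF, laplacePDF, mul_left_comm, ← Real.exp_add]
  ring_nf

instance (b : ℝ) : SigmaFinite (laplaceMeasure b) :=
  SigmaFinite.withDensity_ofReal _

instance (b : ℝ) : (laplaceMeasure b).IsNegInvariant := by
  refine ⟨Measure.ext fun s hs => ?_⟩
  rw [Measure.neg, Measure.map_apply measurable_neg hs, laplaceMeasure_eq_withDensity,
    withDensity_apply _ (measurable_neg hs), withDensity_apply _ hs,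
    ← lintegral_indicator (measurable_neg hs), ← lintegral_indicator hs,
    ← lintegral_neg_eq_self (s.indicator _)]
  congr 1 with x
  simp only [indicator, laplacePDF_neg]
  rfl

theorem laplacePDF_of_nonneg (b : ℝ) {t : ℝ} (ht : 0 ≤ t) :
    laplacePDF b t = 1 / (2 * b) * Real.exp (-(b⁻¹ * t)) := by
  rw [laplacePDF, abs_of_nonneg ht]
  ring_nf

theorem integral_laplacePDF_Ioi {b u : ℝ} (hb : 0 < b) (hu : 0 ≤ u) :
    ∫ t in Ioi u, laplacePDF b t = Real.exp (-u / b) / 2 := by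
  rw [setIntegral_congr_fun measurableSet_Ioi fun t ht =>
      laplacePDF_of_nonneg b (hu.trans ht.out.le), integral_const_mul,
    integral_comp_mul_left_Ioi (fun x => Real.exp (-x)) u (inv_pos.mpr hb),
    integral_exp_neg_Ioi, smul_eq_mul]
  field_simp

theorem integrableOn_laplacePDF_Ioi {b u : ℝ} (hb : 0 < b) (hu : 0 ≤ u) :
    IntegrableOn (laplacePDF b) (Ioi u) := by
  refine IntegrableOn.congr_fun ((exp_neg_integrableOn_Ioi u (inv_pos.mpr hb)).const_mul
    (1 / (2 * b))) (fun t ht => ?_) measurableSet_Ioi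
  rw [laplacePDF_of_nonneg b (hu.trans ht.out.le), neg_mul]

theorem laplaceMeasure_Ioi {b u : ℝ} (hb : 0 < b) (hu : 0 ≤ u) :
    laplaceMeasure b (Ioi u) = ENNReal.ofReal (Real.exp (-u / b) / 2) := by
  rw [laplaceMeasure_eq_withDensity, withDensity_apply _ measurableSet_Ioi,
    ← integral_laplacePDF_Ioi hb hu, ofReal_integral_eq_lintegral_ofReal
      (integrableOn_laplacePDF_Ioi hb hu) (.of_forall fun t => by unfold laplacePDF; positivity)]

theorem laplaceMeasure_Iio_neg {b u : ℝ} (hb : 0 < b) (hu : 0 ≤ u) :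
    laplaceMeasure b (Iio (-u)) = ENNReal.ofReal (Real.exp (-u / b) / 2) := by
  rw [← Set.neg_Ioi, Measure.measure_neg, laplaceMeasure_Ioi hb hu]

theorem isProbabilityMeasure_laplaceMeasure {b : ℝ} (hb : 0 < b) :
    IsProbabilityMeasure (laplaceMeasure b) := by
  have hIci : laplaceMeasure b (Ici 0) = laplaceMeasure b (Ioi 0) :=
    measure_congr ((withDensity_absolutelyContinuous _ _).ae_eq Ioi_ae_eq_Ici).symm
  constructor
  rw [← Iio_union_Ici, measure_union (Iio_disjoint_Ici le_rfl) measurableSet_Ici, hIci,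
    ← neg_zero, laplaceMeasure_Iio_neg hb le_rfl, neg_zero, laplaceMeasure_Ioi hb le_rfl,
    ← ENNReal.ofReal_add (by positivity) (by positivity)]
  norm_num

theorem exists_laplaceMeasure_eq_abs_add_sub_abs_eq {b : ℝ} (hb : 0 < b) (s : ℝ) :
    ∃ T, MeasurableSet T ∧ laplaceMeasure b T = ENNReal.ofReal (Real.exp (-|s| / b) / 2) ∧
      ∀ t ∈ T, |t + s| - |t| = -|s| := by
  rcases le_or_gt 0 s with hs | hs
  · refine ⟨Iio (-s), measurableSet_Iio, by rw [abs_of_nonneg hs, laplaceMeasure_Iio_neg hb hs],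
      fun t ht => ?_⟩
    rw [abs_of_nonneg hs, abs_of_neg (by linarith [ht.out]), abs_of_neg (by linarith [ht.out])]
    ring
  · refine ⟨Ioi (-s), measurableSet_Ioi,
      by rw [abs_of_neg hs, laplaceMeasure_Ioi hb (by linarith)], fun t ht => ?_⟩
    rw [abs_of_neg hs, abs_of_pos (by linarith [ht.out]), abs_of_pos (by linarith [ht.out])]
    ring

theorem lintegral_exp_mul_abs_add_sub_abs_le {b : ℝ} (hb : 0 < b) (s : ℝ) {θ : ℝ} (hθ : 0 ≤ θ) :
    ∫⁻ t, ENNReal.ofReal (Real.exp (θ * (|t + s| - |t|))) ∂laplaceMeasure b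
      ≤ ENNReal.ofReal (Real.exp (θ ^ 2 * s ^ 2 / 2 + θ * s ^ 2 / b)) := by
  have := isProbabilityMeasure_laplaceMeasure hb
  -- `|t + s| - |t| ≤ |s|`, with equality to `-|s|` on a tail of mass `e^{-|s|/b}/2`; the
  -- resulting two-point bound is `cosh (θ|s|) + sinh (θ|s|) (1 - e^{-|s|/b})`.
  obtain ⟨T, hT, hTμ, hTeq⟩ := exists_laplaceMeasure_eq_abs_add_sub_abs_eq hb s
  have hp : Real.exp (-|s| / b) ≤ 1 :=
    Real.exp_le_one_iff.mpr (div_nonpos_of_nonpos_of_nonneg (neg_nonpos.mpr (abs_nonneg s)) hb.le)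
  refine (lintegral_ofReal_exp_mul_le_of_eqOn hθ hT (fun t => ?_) hTeq).trans ?_
  · linarith [abs_add_le t s]
  rw [measure_compl hT (measure_ne_top _ _), measure_univ, hTμ, ← ENNReal.ofReal_one,
    ← ENNReal.ofReal_sub _ (by positivity), ← ENNReal.ofReal_mul (by positivity),
    ← ENNReal.ofReal_mul (by positivity), ← ENNReal.ofReal_add (by positivity)
      (mul_nonneg (by positivity) (by linarith)), ← sq_abs s]
  refine ENNReal.ofReal_le_ofReal (le_trans (le_of_eq ?_)
    (Real.cosh_add_sinh_mul_one_sub_exp_le hb (abs_nonneg s) hθ))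
  rw [Real.cosh_eq, Real.sinh_eq, ← neg_mul]
  ring

theorem pi_laplaceMeasure_eq_withDensity (ι : Type*) [Fintype ι] (b : ℝ) :
    Measure.pi (fun _ : ι => laplaceMeasure b)
      = volume.withDensity fun x => ∏ j, ENNReal.ofReal (laplacePDF b (x j)) := by
  rw [volume_pi]
  exact Measure.pi_withDensity fun _ => by fun_prop

theorem laplace_chernoff_exponent_le {n Δ ε r b θ : ℝ} (hn : 0 < n) (hΔ : 0 < Δ) (hε : 0 < ε)
    (hr : 0 < r) (hb : b = (2 * √(2 * n * r) + √(n * ε)) * Δ / ε)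
    (hθ : θ = √(2 * n * r) / (n * Δ)) :
    -(θ * (ε * b)) + n * (θ ^ 2 * Δ ^ 2 / 2 + θ * Δ ^ 2 / b) ≤ -r := by
  set S₁ := √(2 * n * r)
  set S₂ := √(n * ε)
  have hS₁ : 0 < S₁ := Real.sqrt_pos.mpr (by positivity)
  have hS₂ : 0 < S₂ := Real.sqrt_pos.mpr (by positivity)
  have hS₁sq : S₁ ^ 2 = 2 * n * r := Real.sq_sqrt (by positivity)
  have hS₂sq : S₂ ^ 2 = n * ε := Real.sq_sqrt (by positivity)
  have hexp : -(θ * (ε * b)) + n * (θ ^ 2 * Δ ^ 2 / 2 + θ * Δ ^ 2 / b)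
      = -(S₁ * (2 * S₁ + S₂)) / n + S₁ ^ 2 / (2 * n) + S₁ * ε / (2 * S₁ + S₂) := by
    rw [hθ, hb]
    field_simp
    ring
  have hlast : S₁ * ε / (2 * S₁ + S₂) ≤ S₁ * S₂ / n := by
    rw [div_le_div_iff₀ (by positivity) hn]
    nlinarith [mul_pos hS₁ hS₂, mul_pos (mul_pos hS₁ hS₁) hS₂]
  have hrest : -(S₁ * (2 * S₁ + S₂)) / n + S₁ ^ 2 / (2 * n) + S₁ * S₂ / n = -3 * r := by
    field_simp
    linear_combination (-3 : ℝ) * hS₁sq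
  linarith

section LaplaceVector

variable {ι : Type*} [Fintype ι] [Nonempty ι] {ε δ Δ b : ℝ}

theorem pi_laplaceMeasure_sum_abs_add_sub_abs_ge_le (hε : 0 < ε) (hδ : δ ∈ Ioo 0 1)
    (hΔ : 0 < Δ)
    (hb : b = (2 * √(2 * Fintype.card ι * Real.log (1 / δ)) + √(Fintype.card ι * ε)) * Δ / ε)
    {s : ι → ℝ} (hs : ∀ j, |s j| ≤ Δ) :
    Measure.pi (fun _ : ι => laplaceMeasure b) {x | ε * b ≤ ∑ j, (|x j + s j| - |x j|)}
      ≤ ENNReal.ofReal δ := by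
  set n : ℝ := (Fintype.card ι : ℝ)
  have hn : 0 < n := by positivity
  set r := Real.log (1 / δ) with hr_def
  have hr : 0 < r := Real.log_pos (one_lt_one_div hδ.1 hδ.2)
  have hb₀ : 0 < b := by rw [hb]; positivity
  set θ := √(2 * n * r) / (n * Δ) with hθ
  have hθ₀ : 0 ≤ θ := by positivity
  calc Measure.pi (fun _ : ι => laplaceMeasure b) {x | ε * b ≤ ∑ j, (|x j + s j| - |x j|)}
      ≤ ENNReal.ofReal (Real.exp (-(θ * (ε * b))))
          * ∏ j, ∫⁻ t, ENNReal.ofReal (Real.exp (θ * (|t + s j| - |t|))) ∂laplaceMeasure b :=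
        measure_pi_sum_ge_le_exp_mul_prod (fun j => by fun_prop) hθ₀ _
    _ ≤ ENNReal.ofReal (Real.exp (-(θ * (ε * b))))
          * ∏ _j : ι, ENNReal.ofReal (Real.exp (θ ^ 2 * Δ ^ 2 / 2 + θ * Δ ^ 2 / b)) := by
        gcongr with j
        refine (lintegral_exp_mul_abs_add_sub_abs_le hb₀ (s j) hθ₀).trans ?_
        have : s j ^ 2 ≤ Δ ^ 2 := sq_le_sq.mpr ((hs j).trans (le_abs_self Δ))
        gcongr
    _ = ENNReal.ofReal (Real.exp (-(θ * (ε * b)) + n * (θ ^ 2 * Δ ^ 2 / 2 + θ * Δ ^ 2 / b))) := by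
        rw [Finset.prod_const, ← ENNReal.ofReal_pow (Real.exp_pos _).le, ← Real.exp_nat_mul,
          ← ENNReal.ofReal_mul (Real.exp_pos _).le, ← Real.exp_add, Finset.card_univ]
    _ ≤ ENNReal.ofReal (Real.exp (-r)) := by
        gcongr
        exact laplace_chernoff_exponent_le hn hΔ hε hr hb hθ
    _ = ENNReal.ofReal δ := by
        rw [hr_def, one_div, Real.log_inv, neg_neg, Real.exp_log hδ.1]

theorem pi_laplaceMeasure_preimage_add_le (hε : 0 < ε) (hδ : δ ∈ Ioo 0 1) (hΔ : 0 < Δ)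
    (hb : b = (2 * √(2 * Fintype.card ι * Real.log (1 / δ)) + √(Fintype.card ι * ε)) * Δ / ε)
    {s : ι → ℝ} (hs : ∀ j, |s j| ≤ Δ) {B : Set (ι → ℝ)} (hB : MeasurableSet B) :
    Measure.pi (fun _ : ι => laplaceMeasure b) ((· + s) ⁻¹' B)
      ≤ ENNReal.ofReal (Real.exp ε) * Measure.pi (fun _ : ι => laplaceMeasure b) B
        + ENNReal.ofReal δ := by
  have hb₀ : 0 < b := by
    rw [hb]
    have := Real.log_pos (one_lt_one_div hδ.1 hδ.2)
    positivity
  set q : (ι → ℝ) → ℝ≥0∞ := fun x => ∏ j, ENNReal.ofReal (laplacePDF b (x j))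
  have hq : Measurable q := by fun_prop
  set F := {x : ι → ℝ | ε * b ≤ ∑ j, (|x j + s j| - |x j|)}
  have hF : MeasurableSet F := measurableSet_le measurable_const (by fun_prop)
  have hloss : ∀ x ∉ F, q x ≤ ENNReal.ofReal (Real.exp ε) * q (x + s) := by
    intro x hx
    have hq_eq :
        q x = ENNReal.ofReal (Real.exp ((∑ j, (|x j + s j| - |x j|)) / b)) * q (x + s) := by
      simp only [q, Finset.sum_div, Real.exp_sum, Pi.add_apply]
      rw [ENNReal.ofReal_prod_of_nonneg fun j _ => (Real.exp_pos _).le, ← Finset.prod_mul_distrib]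
      refine Finset.prod_congr rfl fun j _ => ?_
      rw [← ENNReal.ofReal_mul (Real.exp_pos _).le, ← laplacePDF_eq_exp_mul_laplacePDF_add]
    rw [hq_eq]
    gcongr
    rw [div_le_iff₀ hb₀]
    exact (not_le.mp hx).le
  rw [pi_laplaceMeasure_eq_withDensity]
  calc volume.withDensity q ((· + s) ⁻¹' B)
      ≤ ENNReal.ofReal (Real.exp ε) * volume.withDensity (fun x => q (x + s)) ((· + s) ⁻¹' B)
        + volume.withDensity q F :=
        withDensity_apply_le_mul_add (hq.comp (measurable_add_const s))
          (measurable_add_const s hB) hF hloss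
    _ ≤ ENNReal.ofReal (Real.exp ε) * volume.withDensity q B + ENNReal.ofReal δ := by
        rw [withDensity_comp_add_right_apply_preimage s hB, ← pi_laplaceMeasure_eq_withDensity]
        gcongr
        exact pi_laplaceMeasure_sum_abs_add_sub_abs_ge_le hε hδ hΔ hb hs

theorem map_add_prod_pi_laplaceMeasure_apply_le {V Z : Type*} [MeasurableSpace V]
    [MeasurableSpace Z] (hε : 0 < ε) (hδ : δ ∈ Ioo 0 1) (hΔ : 0 < Δ)
    (hb : b = (2 * √(2 * Fintype.card ι * Real.log (1 / δ)) + √(Fintype.card ι * ε)) * Δ / ε)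
    {u : V → ι → ℝ} (hu : Measurable u) (hsens : ∀ v v' j, |u v j - u v' j| ≤ Δ)
    {ψ : (ι → ℝ) → Z} (hψ : Measurable ψ) (μ μ' : Measure V) [IsProbabilityMeasure μ]
    [IsProbabilityMeasure μ'] {S : Set Z} (hS : MeasurableSet S) :
    Measure.map (fun p : V × (ι → ℝ) => ψ (u p.1 + p.2))
        (μ.prod (Measure.pi fun _ : ι => laplaceMeasure b)) S
      ≤ ENNReal.ofReal (Real.exp ε) * Measure.map (fun p : V × (ι → ℝ) => ψ (u p.1 + p.2))
          (μ'.prod (Measure.pi fun _ : ι => laplaceMeasure b)) S + ENNReal.ofReal δ := by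
  set φ := fun p : V × (ι → ℝ) => ψ (u p.1 + p.2)
  have hφ : Measurable φ := hψ.comp ((hu.comp measurable_fst).add measurable_snd)
  rw [Measure.map_apply hφ hS, Measure.map_apply hφ hS, Measure.prod_apply (hφ hS),
    Measure.prod_apply (hφ hS)]
  refine lintegral_le_mul_lintegral_add_of_forall_le (measurable_measure_prodMk_left (hφ hS))
    fun v v' => ?_
  have hslice : Prod.mk v ⁻¹' (φ ⁻¹' S) = (· + (u v - u v')) ⁻¹' (Prod.mk v' ⁻¹' (φ ⁻¹' S)) := by
    ext x
    simp only [mem_preimage, φ]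
    rw [show u v' + (x + (u v - u v')) = u v + x by abel]
  rw [hslice]
  exact pi_laplaceMeasure_preimage_add_le hε hδ hΔ hb (hsens v v') (measurable_prodMk_left (hφ hS))

end LaplaceVector

theorem laplace_mechanism_approx_ldp_general {Y : Type*} (ε δ : ℝ) (hε : 0 < ε)
    (hδ : δ ∈ Set.Ioo (0 : ℝ) 1)
    (K T M N' : ℕ) (hK : 1 ≤ K) (hT : 2 ≤ T) (hM : 1 ≤ M)
    (g : Fin K → Fin N' → ℝ)
    (hg : ∀ j v, 1 / ((T : ℝ) * K * M) ≤ g j v ∧ g j v ≤ 1 / (M : ℝ))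
    (hk : Y → Measure (Fin N')) (hkprob : ∀ y, IsProbabilityMeasure (hk y))
    (b : ℝ)
    (hb : b = (2 * Real.sqrt (2 * K * Real.log (1 / δ)) + Real.sqrt (K * ε)) *
      Real.log ((K : ℝ) * T) / ε)
    (c c' : ℝ)
    (R : Y → Measure (Fin K → ℝ))
    (hR : ∀ y, R y =
      Measure.map
        (fun p : Fin N' × (Fin K → ℝ) => fun j : Fin K =>
          -c * (Real.log (g j p.1) + p.2 j + Real.log (M : ℝ) - c'))
        ((hk y).prod (Measure.pi fun _ : Fin K => laplaceMeasure b))) :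
    ∀ (y y' : Y) (S : Set (Fin K → ℝ)), MeasurableSet S →
      R y S ≤ ENNReal.ofReal (Real.exp ε) * R y' S + ENNReal.ofReal δ := by
  intro y y' S hS
  have : Nonempty (Fin K) := Fin.pos_iff_nonempty.mp hK
  have hKT : (1 : ℝ) < K * T := by
    have : (1 : ℝ) ≤ K := by exact_mod_cast hK
    have : (2 : ℝ) ≤ T := by exact_mod_cast hT
    nlinarith
  have hsens : ∀ v v' j, |Real.log (g j v) - Real.log (g j v')| ≤ Real.log (K * T) :=
    fun v v' j => calc
      _ ≤ Real.log ((1 / M) / (1 / (T * K * M))) :=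
        Real.abs_log_sub_log_le_log_div (by positivity) (hg j v) (hg j v')
      _ = Real.log (K * T) := by
        congr 1
        field_simp
  rw [hR, hR]
  exact map_add_prod_pi_laplaceMeasure_apply_le (u := fun v j => Real.log (g j v))
    (ψ := fun z j => -c * (z j + Real.log M - c')) hε hδ (Real.log_pos hKT) (by simpa using hb)
    .of_discrete hsens (by fun_prop) _ _ hS

/-- **The vector Laplace mechanism on clipped log-likelihoods is `(ε,δ)`-locally private.**
Let `g 1, …, g K : [N'] → ℝ` satisfy `1/(TKM) ≤ g j v ≤ 1/M` (clipped distributions, so each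
log-likelihood has sensitivity `log(KT)`), let `h` be any random map from `Y` to `[N']`
(a kernel `hk`), and let `Lap 1, …, Lap K` be i.i.d. Laplace noises with scale
`(2√(2K ln(1/δ)) + √(Kε)) · log(KT)/ε`, independent of `h`.  Then the randomized map
`R y = (−c·(log (g j (h y)) + Lap j + log M − c'))_{j ∈ [K]}` is `(ε,δ)`-locally
differentially private. -/
theorem laplace_mechanism_approx_ldp {Y : Type*} (ε δ : ℝ) (hε : 0 < ε)
    (hδ : δ ∈ Set.Ioo (0 : ℝ) 1)
    (K T M N' : ℕ) (hK : 1 ≤ K) (hT : 2 ≤ T) (hM : 1 ≤ M) (hN' : 1 ≤ N')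
    (g : Fin K → Fin N' → ℝ)
    (hg : ∀ j v, 1 / ((T : ℝ) * K * M) ≤ g j v ∧ g j v ≤ 1 / (M : ℝ))
    (hk : Y → Measure (Fin N')) (hkprob : ∀ y, IsProbabilityMeasure (hk y))
    (b : ℝ)
    (hb : b = (2 * Real.sqrt (2 * K * Real.log (1 / δ)) + Real.sqrt (K * ε)) *
      Real.log ((K : ℝ) * T) / ε)
    (c c' : ℝ)
    (R : Y → Measure (Fin K → ℝ))
    (hR : ∀ y, R y =
      Measure.map
        (fun p : Fin N' × (Fin K → ℝ) => fun j : Fin K =>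
          -c * (Real.log (g j p.1) + p.2 j + Real.log (M : ℝ) - c'))
        ((hk y).prod (Measure.pi fun _ : Fin K => laplaceMeasure b))) :
    ∀ (y y' : Y) (S : Set (Fin K → ℝ)), MeasurableSet S →
      R y S ≤ ENNReal.ofReal (Real.exp ε) * R y' S + ENNReal.ofReal δ :=
  laplace_mechanism_approx_ldp_general ε δ hε hδ K T M N' hK hT hM g hg hk hkprob b hb c c' R hR
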